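/- arXiv:1809.08315 — 2 statements merged into one kernel-verified Lean document; each statement's English description precedes it below -/
import Mathlib

section
/- Let f : [0,1] → ℝ be continuous and not identically zero. Then ∫₀¹ ∫₀¹ f(z) · (1/2)·e^{-|z-y|} · f(y) dy dz > 0, i.e., the kernel G(z,y) = (1/2)·e^{-|z-y|} is positive definite on [0,1]. -/
/-!
Write `P z = ∫_a^z eʸ g y dy` and `Q z = ∫_z^b e⁻ʸ g y dy`. Splitting at `y = z`, the inner
integral is `e⁻ᶻ P z + eᶻ Q z`, and since `P' = eᶻ g`, `Q' = -e⁻ᶻ g`, the function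
`-P Q - e²ᶻ Q²` is a primitive of `g (e⁻ᶻ P + eᶻ Q) - 2 e²ᶻ Q²`. Hence the quadratic form equals
`e²ᵃ Q(a)² + 2 ∫_a^b e²ᶻ Q(z)² dz ≥ 0`, and it vanishes only if `Q ≡ 0` on `[a, b]`, which forces
`g = -eᶻ Q' ≡ 0` there.
-/

open Real Set intervalIntegral

noncomputable def leftExpIntegral (g : ℝ → ℝ) (a z : ℝ) : ℝ := ∫ y in a..z, exp y * g y

noncomputable def rightExpIntegral (g : ℝ → ℝ) (b z : ℝ) : ℝ := ∫ y in z..b, exp (-y) * g y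

section
variable {g : ℝ → ℝ} {a b : ℝ}

theorem hasDerivAt_leftExpIntegral (hg : Continuous g) (a z : ℝ) :
    HasDerivAt (leftExpIntegral g a) (exp z * g z) z :=
  have hc : Continuous fun y => exp y * g y := by fun_prop
  integral_hasDerivAt_right (hc.intervalIntegrable _ _) (hc.stronglyMeasurableAtFilter _ _)
    hc.continuousAt

theorem hasDerivAt_rightExpIntegral (hg : Continuous g) (b z : ℝ) :
    HasDerivAt (rightExpIntegral g b) (-(exp (-z) * g z)) z :=
  have hc : Continuous fun y => exp (-y) * g y := by fun_prop
  integral_hasDerivAt_left (hc.intervalIntegrable _ _) (hc.stronglyMeasurableAtFilter _ _)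
    hc.continuousAt

theorem integral_exp_neg_abs_sub_mul (hg : Continuous g) {z : ℝ} (hz : z ∈ Icc a b) :
    ∫ y in a..b, exp (-|z - y|) * g y =
      exp (-z) * leftExpIntegral g a z + exp z * rightExpIntegral g b z := by
  have hc : Continuous fun y => exp (-|z - y|) * g y := by fun_prop
  rw [← integral_add_adjacent_intervals (hc.intervalIntegrable a z) (hc.intervalIntegrable z b),
    leftExpIntegral, rightExpIntegral, ← integral_const_mul, ← integral_const_mul]
  congr 1
  · refine integral_congr fun y hy => ?_
    rw [uIcc_of_le hz.1] at hy
    rw [abs_of_nonneg (sub_nonneg.2 hy.2), neg_sub, sub_eq_add_neg, exp_add]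
    ring
  · refine integral_congr fun y hy => ?_
    rw [uIcc_of_le hz.2] at hy
    rw [abs_of_nonpos (sub_nonpos.2 hy.1), neg_neg, sub_eq_add_neg, exp_add]
    ring

theorem hasDerivAt_exp_kernel_primitive (hg : Continuous g) (a b z : ℝ) :
    HasDerivAt (fun z => -(leftExpIntegral g a z * rightExpIntegral g b z) -
        exp (2 * z) * rightExpIntegral g b z ^ 2)
      (g z * (exp (-z) * leftExpIntegral g a z + exp z * rightExpIntegral g b z) -
        2 * (exp (2 * z) * rightExpIntegral g b z ^ 2)) z := by
  have hP := hasDerivAt_leftExpIntegral hg a z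
  have hQ := hasDerivAt_rightExpIntegral hg b z
  have hexp : HasDerivAt (fun z => exp (2 * z)) (exp (2 * z) * 2) z := by
    simpa using ((hasDerivAt_id z).const_mul 2).exp
  refine ((hP.mul hQ).neg.sub (hexp.mul (hQ.pow 2))).congr_deriv ?_
  rw [Pi.pow_apply, show 2 * z = z + z by ring, exp_add, exp_neg]
  field_simp
  ring

theorem integral_mul_exp_neg_abs_sub_mul (hg : Continuous g) (hab : a ≤ b) :
    ∫ z in a..b, ∫ y in a..b, g z * exp (-|z - y|) * g y =
      exp (2 * a) * rightExpIntegral g b a ^ 2 +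
        2 * ∫ z in a..b, exp (2 * z) * rightExpIntegral g b z ^ 2 := by
  have hPc : Continuous (leftExpIntegral g a) :=
    continuous_iff_continuousAt.2 fun z => (hasDerivAt_leftExpIntegral hg a z).continuousAt
  have hQc : Continuous (rightExpIntegral g b) :=
    continuous_iff_continuousAt.2 fun z => (hasDerivAt_rightExpIntegral hg b z).continuousAt
  have hT := hasDerivAt_exp_kernel_primitive hg a b
  calc ∫ z in a..b, ∫ y in a..b, g z * exp (-|z - y|) * g y
      = ∫ z in a..b, g z * (exp (-z) * leftExpIntegral g a z + exp z * rightExpIntegral g b z) := by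
        refine integral_congr fun z hz => ?_
        simp_rw [mul_assoc, integral_const_mul]
        rw [integral_exp_neg_abs_sub_mul hg (uIcc_of_le hab ▸ hz)]
    _ = ∫ z in a..b, ((g z * (exp (-z) * leftExpIntegral g a z + exp z * rightExpIntegral g b z) -
          2 * (exp (2 * z) * rightExpIntegral g b z ^ 2)) +
          2 * (exp (2 * z) * rightExpIntegral g b z ^ 2)) := by
        simp only [sub_add_cancel]
    _ = _ := by
        rw [integral_add (by apply Continuous.intervalIntegrable; fun_prop)
          (by apply Continuous.intervalIntegrable; fun_prop),
          integral_eq_sub_of_hasDerivAt (fun z _ => hT z)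
            (by apply Continuous.intervalIntegrable; fun_prop), integral_const_mul]
        simp [leftExpIntegral, rightExpIntegral]

theorem eqOn_zero_of_rightExpIntegral_eqOn_zero (hg : Continuous g) (hab : a < b)
    (hQ : EqOn (rightExpIntegral g b) 0 (Icc a b)) : EqOn g 0 (Icc a b) := by
  intro z hz
  have hderiv : -(exp (-z) * g z) = 0 :=
    (uniqueDiffOn_Icc hab z hz).eq_deriv _ (hasDerivAt_rightExpIntegral hg b z).hasDerivWithinAt
      ((hasDerivWithinAt_const z _ 0).congr hQ (hQ hz))
  simpa [(exp_pos _).ne'] using hderiv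

theorem integral_mul_exp_neg_abs_sub_mul_pos (hg : Continuous g) (hab : a < b)
    (hne : ∃ z ∈ Icc a b, g z ≠ 0) :
    0 < ∫ z in a..b, ∫ y in a..b, g z * exp (-|z - y|) * g y := by
  have hQc : Continuous (rightExpIntegral g b) :=
    continuous_iff_continuousAt.2 fun z => (hasDerivAt_rightExpIntegral hg b z).continuousAt
  obtain ⟨c, hc, hQc_ne⟩ : ∃ c ∈ Icc a b, rightExpIntegral g b c ≠ 0 := by
    by_contra! hQ
    obtain ⟨z, hz, hgz⟩ := hne
    exact hgz (eqOn_zero_of_rightExpIntegral_eqOn_zero hg hab hQ hz)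
  have hpos : 0 < ∫ z in a..b, exp (2 * z) * rightExpIntegral g b z ^ 2 :=
    integral_pos hab (by fun_prop) (fun z _ => by positivity) ⟨c, hc, by positivity⟩
  rw [integral_mul_exp_neg_abs_sub_mul hg hab.le]
  positivity

end

theorem ContinuousOn.exists_continuous_eqOn_Icc {f : ℝ → ℝ} {a b : ℝ} (hab : a ≤ b)
    (hf : ContinuousOn f (Icc a b)) : ∃ g : ℝ → ℝ, Continuous g ∧ EqOn f g (Icc a b) :=
  ⟨IccExtend hab ((Icc a b).domRestrict f), hf.domRestrict.Icc_extend',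
    fun _ hx => (IccExtend_of_mem hab ((Icc a b).domRestrict f) hx).symm⟩

/-- The exponential kernel `G(z,y) = (1/2)·e^{-|z-y|}` is positive definite on `[0,1]`:
for every continuous `f : [0,1] → ℝ` not identically zero,
`∫₀¹∫₀¹ f(z) G(z,y) f(y) dy dz > 0`. -/
theorem exp_kernel_positive_definite
    (f : ℝ → ℝ) (hf : ContinuousOn f (Set.Icc 0 1))
    (hne : ∃ z ∈ Set.Icc (0:ℝ) 1, f z ≠ 0) :
    0 < ∫ z in (0:ℝ)..1, ∫ y in (0:ℝ)..1,
          f z * ((1/2) * Real.exp (-|z - y|)) * f y := by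
  obtain ⟨g, hg, hfg⟩ := hf.exists_continuous_eqOn_Icc zero_le_one
  have hgne : ∃ z ∈ Icc (0:ℝ) 1, g z ≠ 0 := by
    obtain ⟨z, hz, hfz⟩ := hne
    exact ⟨z, hz, hfg hz ▸ hfz⟩
  have hfg' : ∀ z ∈ uIcc (0:ℝ) 1, f z = g z := fun z hz => hfg (uIcc_of_le (zero_le_one' ℝ) ▸ hz)
  calc (0:ℝ) < 1 / 2 * ∫ z in (0:ℝ)..1, ∫ y in (0:ℝ)..1, g z * exp (-|z - y|) * g y :=
        by have := integral_mul_exp_neg_abs_sub_mul_pos hg zero_lt_one hgne; positivity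
    _ = _ := by
        rw [← integral_const_mul]
        refine integral_congr fun z hz => ?_
        rw [← integral_const_mul]
        refine integral_congr fun y hy => ?_
        simp only [hfg' z hz, hfg' y hy]
        ring
end

section
/- Let 0 < ζ < 1 and define G_r(z,y) = (1/2)·e^{-|z-y|} - (1/2)·e^{2ζ-z-y} for z, y ∈ [ζ,1]. For every continuous f : [ζ,1] → ℝ, the function u₂(z) = ∫_ζ¹ G_r(z,y) f(y) dy is twice continuously differentiable on [ζ,1], satisfies u₂(z) - u₂''(z) = f(z) for all z ∈ [ζ,1], and satisfies the boundary conditions u₂(ζ) = 0 and u₂(1) = -u₂'(1). -/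
/-!
Splitting `∫ₐᵇ e^{-|z-y|} g(y) dy` at `y = z` writes the free-space part of the kernel as
`(e^{-z} L(z) + e^{z} R(z)) / 2` with the exponential moments `L(z) = ∫ₐᶻ e^y g` and
`R(z) = ∫_zᵇ e^{-y} g`. Differentiating twice under the fundamental theorem of calculus gives
`v'' = v - g`, and the free-space solution already satisfies the Robin condition `v(b) = -v'(b)`.
The second term of the kernel is a multiple of `e^{-z}`, which solves the homogeneous equation,
keeps the Robin condition at `b`, and is chosen to cancel the value at `a = ζ`.
-/

open Real Set intervalIntegral

noncomputable section

lemma contDiff_two_of_hasDerivAt {v w w' : ℝ → ℝ} (hv : ∀ z, HasDerivAt v (w z) z)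
    (hw : ∀ z, HasDerivAt w (w' z) z) (hw' : Continuous w') : ContDiff ℝ 2 v := by
  have hw1 : ContDiff ℝ (0 + 1) w := by
    rw [contDiff_succ_iff_deriv]
    refine ⟨fun z => (hw z).differentiableAt, by simp, ?_⟩
    rw [funext fun z => (hw z).deriv]
    exact contDiff_zero.2 hw'
  change ContDiff ℝ (1 + 1) v
  rw [contDiff_succ_iff_deriv]
  refine ⟨fun z => (hv z).differentiableAt, by simp, ?_⟩
  rw [funext fun z => (hv z).deriv]
  simpa using hw1

lemma derivWithin_eqOn_of_eqOn_of_hasDerivAt {u v w : ℝ → ℝ} {s : Set ℝ}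
    (hs : UniqueDiffOn ℝ s) (huv : EqOn u v s) (hv : ∀ z ∈ s, HasDerivAt v (w z) z) :
    EqOn (derivWithin u s) w s := fun z hz => by
  rw [derivWithin_congr huv (huv hz)]
  exact (hv z hz).hasDerivWithinAt.derivWithin (hs z hz)

namespace ExpKernel

def leftMoment (a : ℝ) (g : ℝ → ℝ) (z : ℝ) : ℝ := ∫ y in a..z, exp y * g y

def rightMoment (b : ℝ) (g : ℝ → ℝ) (z : ℝ) : ℝ := ∫ y in z..b, exp (-y) * g y

/-- Agrees with `z ↦ ∫ₐᵇ (1/2) e^{-|z-y|} g(y) dy` on `[a, b]`, but is smooth on `ℝ`. -/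
def freeSol (a b : ℝ) (g : ℝ → ℝ) (z : ℝ) : ℝ :=
  (exp (-z) * leftMoment a g z + exp z * rightMoment b g z) / 2

def freeSolDeriv (a b : ℝ) (g : ℝ → ℝ) (z : ℝ) : ℝ :=
  (-(exp (-z) * leftMoment a g z) + exp z * rightMoment b g z) / 2

def rightChildSol (a b : ℝ) (g : ℝ → ℝ) (z : ℝ) : ℝ :=
  freeSol a b g z - exp (2 * a - z) * rightMoment b g a / 2

def rightChildSolDeriv (a b : ℝ) (g : ℝ → ℝ) (z : ℝ) : ℝ :=
  freeSolDeriv a b g z + exp (2 * a - z) * rightMoment b g a / 2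

variable {a b : ℝ} {g : ℝ → ℝ}

lemma hasDerivAt_leftMoment (hg : Continuous g) (z : ℝ) :
    HasDerivAt (leftMoment a g) (exp z * g z) z :=
  have hc : Continuous fun y => exp y * g y := continuous_exp.mul hg
  integral_hasDerivAt_right (hc.intervalIntegrable _ _) (hc.stronglyMeasurableAtFilter _ _)
    hc.continuousAt

lemma hasDerivAt_rightMoment (hg : Continuous g) (z : ℝ) :
    HasDerivAt (rightMoment b g) (-(exp (-z) * g z)) z :=
  have hc : Continuous fun y => exp (-y) * g y := (continuous_exp.comp continuous_neg).mul hg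
  integral_hasDerivAt_left (hc.intervalIntegrable _ _) (hc.stronglyMeasurableAtFilter _ _)
    hc.continuousAt

lemma hasDerivAt_exp_neg (z : ℝ) : HasDerivAt (fun z => exp (-z)) (-exp (-z)) z := by
  simpa using (hasDerivAt_neg z).exp

lemma hasDerivAt_freeSol (hg : Continuous g) (z : ℝ) :
    HasDerivAt (freeSol a b g) (freeSolDeriv a b g z) z := by
  refine ((((hasDerivAt_exp_neg z).mul (hasDerivAt_leftMoment (a := a) hg z)).add
    ((hasDerivAt_exp z).mul (hasDerivAt_rightMoment (b := b) hg z))).div_const 2).congr_deriv ?_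
  rw [freeSolDeriv, exp_neg]
  field_simp
  ring

lemma hasDerivAt_freeSolDeriv (hg : Continuous g) (z : ℝ) :
    HasDerivAt (freeSolDeriv a b g) (freeSol a b g z - g z) z := by
  refine ((((hasDerivAt_exp_neg z).mul (hasDerivAt_leftMoment (a := a) hg z)).neg.add
    ((hasDerivAt_exp z).mul (hasDerivAt_rightMoment (b := b) hg z))).div_const 2).congr_deriv ?_
  rw [freeSol, exp_neg]
  field_simp
  ring

lemma hasDerivAt_exp_sub (c z : ℝ) : HasDerivAt (fun z => exp (c - z)) (-exp (c - z)) z := by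
  simpa using ((hasDerivAt_id z).const_sub c).exp

lemma hasDerivAt_rightChildSol (hg : Continuous g) (z : ℝ) :
    HasDerivAt (rightChildSol a b g) (rightChildSolDeriv a b g z) z := by
  refine ((hasDerivAt_freeSol hg z).sub
    (((hasDerivAt_exp_sub (2 * a) z).mul_const (rightMoment b g a)).div_const 2)).congr_deriv ?_
  rw [rightChildSolDeriv]
  ring

lemma hasDerivAt_rightChildSolDeriv (hg : Continuous g) (z : ℝ) :
    HasDerivAt (rightChildSolDeriv a b g) (rightChildSol a b g z - g z) z := by
  refine ((hasDerivAt_freeSolDeriv hg z).add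
    (((hasDerivAt_exp_sub (2 * a) z).mul_const (rightMoment b g a)).div_const 2)).congr_deriv ?_
  rw [rightChildSol]
  ring

lemma continuous_rightChildSol (hg : Continuous g) : Continuous (rightChildSol a b g) :=
  continuous_iff_continuousAt.2 fun z => (hasDerivAt_rightChildSol hg z).continuousAt

lemma rightChildSol_left : rightChildSol a b g a = 0 := by
  have h : exp (2 * a - a) = exp a := by ring_nf
  simp only [rightChildSol, freeSol, leftMoment, integral_same, h]
  ring

lemma rightChildSol_right :
    rightChildSol a b g b = -rightChildSolDeriv a b g b := by
  simp only [rightChildSol, rightChildSolDeriv, freeSol, freeSolDeriv, rightMoment,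
    integral_same]
  ring

lemma integral_exp_neg_abs_mul (hg : Continuous g) {z : ℝ} (hz : z ∈ Icc a b) :
    ∫ y in a..b, exp (-|z - y|) * g y =
      exp (-z) * leftMoment a g z + exp z * rightMoment b g z := by
  have hc : Continuous fun y => exp (-|z - y|) * g y := by fun_prop
  rw [← integral_add_adjacent_intervals (hc.intervalIntegrable a z) (hc.intervalIntegrable z b),
    leftMoment, rightMoment, ← integral_const_mul, ← integral_const_mul]
  congr 1
  · refine integral_congr fun y hy => ?_
    rw [uIcc_of_le hz.1] at hy
    rw [abs_of_nonneg (sub_nonneg.2 hy.2), neg_sub, sub_eq_add_neg, exp_add]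
    ring
  · refine integral_congr fun y hy => ?_
    rw [uIcc_of_le hz.2] at hy
    rw [abs_sub_comm, abs_of_nonneg (sub_nonneg.2 hy.1), neg_sub, sub_eq_add_neg, exp_add]
    ring

lemma integral_rightChildKernel_mul (hg : Continuous g) {z : ℝ} (hz : z ∈ Icc a b) :
    ∫ y in a..b, ((1/2) * exp (-|z - y|) - (1/2) * exp (2*a - z - y)) * g y =
      rightChildSol a b g z := by
  have hsplit : ∀ y, ((1/2) * exp (-|z - y|) - (1/2) * exp (2*a - z - y)) * g y =
      (1/2) * (exp (-|z - y|) * g y) - (exp (2 * a - z) / 2) * (exp (-y) * g y) := fun y => by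
    rw [sub_eq_add_neg (2 * a - z) y, exp_add]
    ring
  have hR : ∫ y in a..b, exp (-y) * g y = rightMoment b g a := rfl
  simp_rw [hsplit]
  rw [integral_sub (Continuous.intervalIntegrable (by fun_prop) _ _)
    (Continuous.intervalIntegrable (by fun_prop) _ _), integral_const_mul, integral_const_mul,
    integral_exp_neg_abs_mul hg hz, hR, rightChildSol, freeSol]
  ring

end ExpKernel

open ExpKernel in
theorem right_child_kernel_is_green_function_general
    (ζ : ℝ) (hζ1 : ζ < 1)
    (f : ℝ → ℝ) (hf : ContinuousOn f (Set.Icc ζ 1))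
    (u₂ : ℝ → ℝ)
    (hu₂ : ∀ z, u₂ z = ∫ y in ζ..1,
        ((1/2) * Real.exp (-|z - y|) - (1/2) * Real.exp (2*ζ - z - y)) * f y) :
    ContDiffOn ℝ 2 u₂ (Set.Icc ζ 1) ∧
    (∀ z ∈ Set.Icc ζ (1:ℝ),
      u₂ z - derivWithin (derivWithin u₂ (Set.Icc ζ 1)) (Set.Icc ζ 1) z = f z) ∧
    u₂ ζ = 0 ∧
    u₂ 1 = - derivWithin u₂ (Set.Icc ζ 1) 1 := by
  set g := IccExtend hζ1.le ((Icc ζ 1).domRestrict f)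
  have hg : Continuous g := continuous_IccExtend_iff.2 hf.domRestrict
  have hgf : EqOn g f (Icc ζ 1) := fun z hz => IccExtend_of_mem _ _ hz
  have hu : EqOn u₂ (rightChildSol ζ 1 g) (Icc ζ 1) := fun z hz => by
    rw [hu₂, ← integral_rightChildKernel_mul hg hz]
    refine integral_congr fun y hy => ?_
    rw [uIcc_of_le hζ1.le] at hy
    simp only [hgf hy]
  have hs := uniqueDiffOn_Icc hζ1
  have hu' := derivWithin_eqOn_of_eqOn_of_hasDerivAt hs hu
    fun z _ => hasDerivAt_rightChildSol hg z
  have hu'' := derivWithin_eqOn_of_eqOn_of_hasDerivAt hs hu'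
    fun z _ => hasDerivAt_rightChildSolDeriv hg z
  have hζ : ζ ∈ Icc ζ 1 := left_mem_Icc.2 hζ1.le
  have h1 : (1 : ℝ) ∈ Icc ζ 1 := right_mem_Icc.2 hζ1.le
  refine ⟨(contDiff_two_of_hasDerivAt (hasDerivAt_rightChildSol hg)
      (hasDerivAt_rightChildSolDeriv hg) ((continuous_rightChildSol hg).sub hg)).contDiffOn.congr
      hu,
    fun z hz => ?_, ?_, ?_⟩
  · simp only [hu'' hz, hu hz, hgf hz, sub_sub_cancel]
  · rw [hu hζ, rightChildSol_left]
  · rw [hu h1, hu' h1, rightChildSol_right]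

/-- The right-child kernel `G_r(z,y) = (1/2)e^{-|z-y|} - (1/2)e^{2ζ-z-y}` is the Green's
function of `u - u'' = f` on `[ζ,1]` with boundary conditions `u(ζ) = 0`, `u(1) = -u'(1)`:
for continuous `f`, the function `u₂(z) = ∫_ζ¹ G_r(z,y) f(y) dy` is twice continuously
differentiable on `[ζ,1]`, satisfies the ODE there, and satisfies the boundary conditions. -/
theorem right_child_kernel_is_green_function
    (ζ : ℝ) (hζ0 : 0 < ζ) (hζ1 : ζ < 1)
    (f : ℝ → ℝ) (hf : ContinuousOn f (Set.Icc ζ 1))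
    (u₂ : ℝ → ℝ)
    (hu₂ : ∀ z, u₂ z = ∫ y in ζ..1,
        ((1/2) * Real.exp (-|z - y|) - (1/2) * Real.exp (2*ζ - z - y)) * f y) :
    ContDiffOn ℝ 2 u₂ (Set.Icc ζ 1) ∧
    (∀ z ∈ Set.Icc ζ (1:ℝ),
      u₂ z - derivWithin (derivWithin u₂ (Set.Icc ζ 1)) (Set.Icc ζ 1) z = f z) ∧
    u₂ ζ = 0 ∧
    u₂ 1 = - derivWithin u₂ (Set.Icc ζ 1) 1 :=
  right_child_kernel_is_green_function_general ζ hζ1 f hf u₂ hu₂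
end
end
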